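/- Let D, C, A be measurable spaces and e : D ≃ᵐ C × A a measurable equivalence. Let μ, ν, α be probability measures on D, C, A respectively with Measure.map e μ = ν.prod α. Define get : D → A by get d = (e d).2 and put : D → A → D by put d a = e.symm ((e d).1, a). Then the joint law of (a, put(d, a)) for (d, a) drawn independently from μ × α equals the joint law of (get(d), d) for d drawn from μ; that is, Measure.map (fun p : D × A => (p.2, put p.1 p.2)) (μ.prod α) = Measure.map (fun d => (get d, d)) μ. (The paper's Proposition 'Manipulator as Bayesian inversion': put composed with an independent copy of the data source is the Bayesian inversion of the classifier get with respect to μ.) -/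

import Mathlib

/-!
Transport everything to `C × A` through `e`: under `μ ⊗ α` the pair `((e d).1, a)` has law
`ν ⊗ α`, because it only forgets the `A`-component of `e d ~ ν ⊗ α` and replaces it by an
independent `α`-sample. Both sides are then the image of `ν ⊗ α` under `(c, a) ↦ (a, e⁻¹ (c, a))`.
-/

open MeasureTheory

theorem map_prodMap_fst_comp_prod_eq_of_map_eq_prod {D C A : Type*} [MeasurableSpace D]
    [MeasurableSpace C] [MeasurableSpace A] {e : D → C × A} (he : Measurable e)
    {μ : Measure D} {ν : Measure C} {α : Measure A} [SFinite μ] [IsProbabilityMeasure α]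
    (h : Measure.map e μ = ν.prod α) :
    Measure.map (Prod.map (Prod.fst ∘ e) id) (μ.prod α) = ν.prod α := by
  rw [← Measure.map_prod_map _ _ (measurable_fst.comp he) measurable_id, Measure.map_id,
    ← Measure.map_map measurable_fst he, h, measurePreserving_fst.map_eq]

theorem manipulator_as_bayesian_inversion_general
    {D C A : Type*} [MeasurableSpace D] [MeasurableSpace C] [MeasurableSpace A]
    (e : D ≃ᵐ C × A)
    (μ : Measure D) (ν : Measure C) (α : Measure A)
    [IsProbabilityMeasure μ] [IsProbabilityMeasure α]
    (h : Measure.map e μ = ν.prod α)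
    (get : D → A) (put : D → A → D)
    (hget : ∀ d, get d = (e d).2)
    (hput : ∀ d a, put d a = e.symm ((e d).1, a)) :
    Measure.map (fun p : D × A => (p.2, put p.1 p.2)) (μ.prod α) =
      Measure.map (fun d => (get d, d)) μ := by
  obtain rfl : get = fun d => (e d).2 := funext hget
  obtain rfl : put = fun d a => e.symm ((e d).1, a) := funext₂ hput
  have hg : Measurable fun q : C × A => (q.2, e.symm q) :=
    measurable_snd.prodMk e.symm.measurable
  calc _ = Measure.map (fun q : C × A => (q.2, e.symm q))
          (Measure.map (Prod.map (Prod.fst ∘ e) id) (μ.prod α)) := by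
        rw [Measure.map_map hg ((measurable_fst.comp e.measurable).prodMap measurable_id)]
        rfl
    _ = Measure.map (fun q : C × A => (q.2, e.symm q)) (ν.prod α) := by
        rw [map_prodMap_fst_comp_prod_eq_of_map_eq_prod e.measurable h]
    _ = _ := by
        rw [← h, Measure.map_map hg e.measurable]
        congr 1
        funext d
        simp

theorem manipulator_as_bayesian_inversion
    {D C A : Type*} [MeasurableSpace D] [MeasurableSpace C] [MeasurableSpace A]
    (e : D ≃ᵐ C × A)
    (μ : Measure D) (ν : Measure C) (α : Measure A)
    [IsProbabilityMeasure μ] [IsProbabilityMeasure ν] [IsProbabilityMeasure α]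
    (h : Measure.map e μ = ν.prod α)
    (get : D → A) (put : D → A → D)
    (hget : ∀ d, get d = (e d).2)
    (hput : ∀ d a, put d a = e.symm ((e d).1, a)) :
    Measure.map (fun p : D × A => (p.2, put p.1 p.2)) (μ.prod α) =
      Measure.map (fun d => (get d, d)) μ :=
  manipulator_as_bayesian_inversion_general e μ ν α h get put hget hput
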